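/- arXiv:1604.02161 — 2 statements merged into one kernel-verified Lean document; each statement's English description precedes it below -/
import Mathlib

section
/- Let (X,d) be a metric space, Y ⊂ X a subset identified isometrically with the β-snowflake line restricted to [0,1] for some β ∈ (0,1), and γ : I → X a rectifiable curve of length L whose image contains the points 0 and 1 of Y. If (a_j, b_j), j ∈ ℕ, are the disjoint open intervals forming [0,1] \ (im(γ) ∩ Y) with all endpoints a_j, b_j in im(γ) ∩ Y, then ∑_{j=1}^∞ |b_j − a_j|^β ≤ L. -/
/-
Only finitely many gaps matter at a time. For each of their endpoints pick a time at which γ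
passes through it and list these times in increasing order τ₀ ≤ ⋯ ≤ τₙ; writing γ(τᵢ) = e(Sᵢ),
the parameters Sᵢ form a walk in [0,1] that visits every endpoint and never enters a gap, and
∑ |S_{i+1} - Sᵢ|^β is a partition sum for the length of γ.

One step may cross several gaps, and for β < 1 its contribution does not dominate the sum over
the gaps it crosses, so the gaps are matched injectively to steps crossing them. Hall's
condition holds: for a set A of gaps, the number of gaps of A to the left of Sᵢ takes at least
#A + 1 values along the walk, and it changes only at steps that cross a gap of A.
-/

open Set

open scoped Finset

theorem Finset.card_image_range_succ_le_one_add_card_filter_ne {α : Type*} [DecidableEq α]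
    (g : ℕ → α) (n : ℕ) :
    #((Finset.range (n + 1)).image g) ≤
      1 + #((Finset.range n).filter fun i => g i ≠ g (i + 1)) := by
  induction n with
  | zero => simp
  | succ n ih =>
    rw [Finset.range_add_one (n := n + 1), Finset.image_insert]
    conv_rhs => rw [Finset.range_add_one, Finset.filter_insert]
    by_cases h : g n = g (n + 1)
    · rw [Finset.insert_eq_of_mem (h ▸ Finset.mem_image_of_mem g (Finset.self_mem_range_succ n)),
        if_neg (not_not.2 h)]
      exact ih
    · rw [if_pos h, Finset.card_insert_of_notMem (s := (Finset.range n).filter _) (by simp)]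
      linarith [Finset.card_insert_le (g (n + 1)) ((Finset.range (n + 1)).image g)]

theorem Finset.exists_monotone_walk {α : Type*} [LinearOrder α] {T : Finset α}
    (hT : T.Nonempty) :
    ∃ (n : ℕ) (τ : ℕ → α), Monotone τ ∧ (∀ i, τ i ∈ T) ∧ ∀ t ∈ T, ∃ i ≤ n, τ i = t := by
  obtain ⟨n, hn⟩ : ∃ n, T.card = n + 1 := Nat.exists_eq_add_one.2 hT.card_pos
  let clamp : ℕ →o Fin (n + 1) := ⟨fun i => ⟨min i n, by omega⟩, fun i j hij => by
    simp only [Fin.mk_le_mk]; omega⟩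
  refine ⟨n, T.orderEmbOfFin hn ∘ clamp, (T.orderEmbOfFin hn).monotone.comp clamp.monotone,
    fun i => Finset.orderEmbOfFin_mem T hn _, fun t ht => ?_⟩
  obtain ⟨k, rfl⟩ : t ∈ Set.range (T.orderEmbOfFin hn) := by rwa [Finset.range_orderEmbOfFin]
  have hk : clamp k = k := Fin.ext (min_eq_left (Fin.is_le k))
  exact ⟨k, Fin.is_le k, by simp only [Function.comp_apply, hk]⟩

theorem Set.uIcc_subset_uIcc_of_notMem_Ioo {α : Type*} [LinearOrder α] {a b x y : α}
    (hab : a ≤ b) (hx : x ∉ Ioo a b) (hxb : x < b) (hby : b ≤ y) : uIcc a b ⊆ uIcc x y := by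
  have hxa : x ≤ a := not_lt.1 fun hax => hx ⟨hax, hxb⟩
  exact uIcc_subset_uIcc (mem_uIcc_of_le hxa (hab.trans hby)) (mem_uIcc_of_le hxb.le hby)

theorem injective_right_of_pairwise_disjoint_Ioo {ι α : Type*} [LinearOrder α]
    [DenselyOrdered α] {a b : ι → α} (hab : ∀ j, a j < b j)
    (hdisj : Pairwise (Function.onFun Disjoint fun j => Ioo (a j) (b j))) :
    Function.Injective b := by
  intro j j' h
  by_contra hne
  have hle := Ioo_disjoint_Ioo.1 (hdisj hne)
  simp only [h, min_self, le_max_iff] at hle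
  rcases hle with hle | hle
  · exact (hab j).not_ge (h ▸ hle)
  · exact (hab j').not_ge hle

section GapCrossing

variable {ι : Type*} (a b : ι → ℝ) (S : ℕ → ℝ) (n : ℕ)

open scoped Classical in
noncomputable def crossingSteps (j : ι) : Finset ℕ :=
  (Finset.range n).filter fun i => uIcc (a j) (b j) ⊆ uIcc (S i) (S (i + 1))

noncomputable def leftGapCount (A : Finset ι) (x : ℝ) : ℕ :=
  #(A.filter fun j => b j ≤ x)

variable {a b S n}

theorem mem_crossingSteps {i : ℕ} {j : ι} :
    i ∈ crossingSteps a b S n j ↔ i < n ∧ uIcc (a j) (b j) ⊆ uIcc (S i) (S (i + 1)) := by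
  simp [crossingSteps]

theorem leftGapCount_lt_leftGapCount {A : Finset ι} {j j' : ι} (hj' : j' ∈ A) (hlt : b j < b j') :
    leftGapCount b A (b j) < leftGapCount b A (b j') := by
  refine Finset.card_lt_card ((Finset.ssubset_iff_of_subset
    (Finset.monotone_filter_right A fun _ _ h => h.trans hlt.le)).2 ⟨j', ?_, ?_⟩) <;>
    simp [hj', hlt]

theorem card_add_one_le_card_image_leftGapCount (hab : ∀ j, a j < b j)
    (hdisj : Pairwise (Function.onFun Disjoint fun j => Ioo (a j) (b j)))
    (ha : ∀ j, ∃ i ≤ n, S i = a j) (hb : ∀ j, ∃ i ≤ n, S i = b j) {A : Finset ι}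
    (hA : A.Nonempty) :
    #A + 1 ≤ #((Finset.range (n + 1)).image (leftGapCount b A ∘ S)) := by
  have hinj : Set.InjOn (leftGapCount b A ∘ b) A := by
    intro j hj j' hj' h
    by_contra hne
    rcases (injective_right_of_pairwise_disjoint_Ioo hab hdisj).ne hne |>.lt_or_gt with hlt | hlt
    · exact (leftGapCount_lt_leftGapCount hj' hlt).ne h
    · exact (leftGapCount_lt_leftGapCount hj hlt).ne h.symm
  have hpos : 0 ∉ A.image (leftGapCount b A ∘ b) := by
    simp only [Finset.mem_image, Function.comp_apply, not_exists, not_and]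
    exact fun j hj h => (Finset.card_pos.2 ⟨j, Finset.mem_filter.2 ⟨hj, le_refl (b j)⟩⟩).ne' h
  have hvals : insert 0 (A.image (leftGapCount b A ∘ b)) ⊆
      (Finset.range (n + 1)).image (leftGapCount b A ∘ S) := by
    refine Finset.insert_subset ?_ fun x hx => ?_
    · obtain ⟨j, -, hmin⟩ := A.exists_min_image b hA
      obtain ⟨i, hi, hSi⟩ := ha j
      refine Finset.mem_image.2 ⟨i, Finset.mem_range.2 (Nat.lt_succ_of_le hi), ?_⟩
      simp only [Function.comp_apply, hSi, leftGapCount, Finset.card_eq_zero,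
        Finset.filter_eq_empty_iff, not_le]
      exact fun j' hj' => (hab j).trans_le (hmin j' hj')
    · obtain ⟨j, -, rfl⟩ := Finset.mem_image.1 hx
      obtain ⟨i, hi, hSi⟩ := hb j
      exact Finset.mem_image.2 ⟨i, Finset.mem_range.2 (Nat.lt_succ_of_le hi), by simp [hSi]⟩
  calc #A + 1 = #(insert 0 (A.image (leftGapCount b A ∘ b))) := by
        rw [Finset.card_insert_of_notMem hpos, Finset.card_image_of_injOn hinj]
    _ ≤ _ := Finset.card_le_card hvals

theorem filter_leftGapCount_ne_subset_biUnion_crossingSteps (hab : ∀ j, a j < b j)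
    (hS : ∀ i j, S i ∉ Ioo (a j) (b j)) (A : Finset ι) :
    (Finset.range n).filter (fun i => leftGapCount b A (S i) ≠ leftGapCount b A (S (i + 1))) ⊆
      A.biUnion (crossingSteps a b S n) := by
  intro i hi
  obtain ⟨hin, hne⟩ := Finset.mem_filter.1 hi
  obtain ⟨j, hj, hside⟩ : ∃ j ∈ A, ¬(b j ≤ S i ↔ b j ≤ S (i + 1)) := by
    by_contra! h
    exact hne (congrArg Finset.card (Finset.filter_congr h))
  refine Finset.mem_biUnion.2 ⟨j, hj, mem_crossingSteps.2 ⟨Finset.mem_range.1 hin, ?_⟩⟩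
  rcases le_or_gt (b j) (S i) with h1 | h1 <;> rcases le_or_gt (b j) (S (i + 1)) with h2 | h2
  · exact absurd (iff_of_true h1 h2) hside
  · rw [uIcc_comm (S i)]
    exact uIcc_subset_uIcc_of_notMem_Ioo (hab j).le (hS _ j) h2 h1
  · exact uIcc_subset_uIcc_of_notMem_Ioo (hab j).le (hS _ j) h1 h2
  · exact absurd (iff_of_false h1.not_ge h2.not_ge) hside

theorem card_le_card_biUnion_crossingSteps (hab : ∀ j, a j < b j)
    (hdisj : Pairwise (Function.onFun Disjoint fun j => Ioo (a j) (b j)))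
    (hS : ∀ i j, S i ∉ Ioo (a j) (b j)) (ha : ∀ j, ∃ i ≤ n, S i = a j)
    (hb : ∀ j, ∃ i ≤ n, S i = b j) (A : Finset ι) :
    #A ≤ #(A.biUnion (crossingSteps a b S n)) := by
  rcases A.eq_empty_or_nonempty with rfl | hA
  · simp
  suffices #A + 1 ≤ 1 + #(A.biUnion (crossingSteps a b S n)) by omega
  calc #A + 1 ≤ #((Finset.range (n + 1)).image (leftGapCount b A ∘ S)) :=
        card_add_one_le_card_image_leftGapCount hab hdisj ha hb hA
    _ ≤ 1 + #((Finset.range n).filter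
          fun i => leftGapCount b A (S i) ≠ leftGapCount b A (S (i + 1))) :=
        Finset.card_image_range_succ_le_one_add_card_filter_ne _ n
    _ ≤ 1 + #(A.biUnion (crossingSteps a b S n)) := Nat.add_le_add_left
        (Finset.card_le_card (filter_leftGapCount_ne_subset_biUnion_crossingSteps hab hS A)) 1

theorem sum_rpow_sub_le_sum_rpow_abs_sub [Fintype ι] {β : ℝ} (hβ : 0 ≤ β)
    (hab : ∀ j, a j < b j) (hdisj : Pairwise (Function.onFun Disjoint fun j => Ioo (a j) (b j)))
    (hS : ∀ i j, S i ∉ Ioo (a j) (b j)) (ha : ∀ j, ∃ i ≤ n, S i = a j)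
    (hb : ∀ j, ∃ i ≤ n, S i = b j) :
    ∑ j, (b j - a j) ^ β ≤ ∑ i ∈ Finset.range n, |S (i + 1) - S i| ^ β := by
  obtain ⟨f, hf_inj, hf⟩ := (Finset.all_card_le_biUnion_card_iff_exists_injective _).1
    (card_le_card_biUnion_crossingSteps hab hdisj hS ha hb)
  have hcross (j : ι) := mem_crossingSteps.1 (hf j)
  calc ∑ j, (b j - a j) ^ β ≤ ∑ j, |S (f j + 1) - S (f j)| ^ β := by
        gcongr with j
        · exact (sub_pos.2 (hab j)).le
        · simpa [abs_of_pos (sub_pos.2 (hab j))] using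
            abs_sub_le_of_uIcc_subset_uIcc (hcross j).2
    _ = ∑ i ∈ Finset.univ.image f, |S (i + 1) - S i| ^ β :=
        (Finset.sum_image (f := fun i => |S (i + 1) - S i| ^ β) fun j _ j' _ h => hf_inj h).symm
    _ ≤ ∑ i ∈ Finset.range n, |S (i + 1) - S i| ^ β :=
        Finset.sum_le_sum_of_subset_of_nonneg
          (Finset.image_subset_iff.2 fun j _ => Finset.mem_range.2 (hcross j).1)
          fun i _ _ => by positivity

end GapCrossing

section Snowflake

variable {X : Type*} [PseudoMetricSpace X] {β : ℝ} {D : Set ℝ} {e : ℝ → X}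

theorem injOn_of_dist_eq_abs_sub_rpow (he : ∀ s ∈ D, ∀ t ∈ D, dist (e s) (e t) = |s - t| ^ β) :
    InjOn e D := by
  intro s hs t ht h
  have hst := he s hs t ht
  rw [h, dist_self, eq_comm, Real.rpow_eq_zero_iff_of_nonneg (abs_nonneg _), abs_eq_zero,
    sub_eq_zero] at hst
  exact hst.1

theorem ofReal_sum_rpow_le_eVariationOn
    (he : ∀ s ∈ D, ∀ t ∈ D, dist (e s) (e t) = |s - t| ^ β) {γ : ℝ → X} {s : Set ℝ}
    {τ : ℕ → ℝ} (hτ : Monotone τ) (hτs : ∀ i, τ i ∈ s) {S : ℕ → ℝ} (hSD : ∀ i, S i ∈ D)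
    (hγS : ∀ i, γ (τ i) = e (S i)) (n : ℕ) :
    ENNReal.ofReal (∑ i ∈ Finset.range n, |S (i + 1) - S i| ^ β) ≤ eVariationOn γ s :=
  calc _ = ∑ i ∈ Finset.range n, edist (γ (τ (i + 1))) (γ (τ i)) := by
        rw [ENNReal.ofReal_sum_of_nonneg fun i _ => by positivity]
        refine Finset.sum_congr rfl fun i _ => ?_
        rw [hγS, hγS, edist_dist, he _ (hSD _) _ (hSD _)]
    _ ≤ eVariationOn γ s := eVariationOn.sum_le hτ hτs

theorem ofReal_sum_rpow_gap_le_eVariationOn {ι : Type*} [Fintype ι] (hβ : 0 ≤ β)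
    (he : ∀ s ∈ D, ∀ t ∈ D, dist (e s) (e t) = |s - t| ^ β) (γ : ℝ → X) (s : Set ℝ)
    (a b : ι → ℝ) (hab : ∀ j, a j < b j)
    (hdisj : Pairwise (Function.onFun Disjoint fun j => Ioo (a j) (b j)))
    (hD : ∀ j, a j ∈ D ∧ b j ∈ D) (hgap : ∀ t ∈ D, e t ∈ γ '' s → ∀ j, t ∉ Ioo (a j) (b j))
    (hend : ∀ j, e (a j) ∈ γ '' s ∧ e (b j) ∈ γ '' s) :
    ENNReal.ofReal (∑ j, (b j - a j) ^ β) ≤ eVariationOn γ s := by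
  cases isEmpty_or_nonempty ι
  · simp
  choose u hu hγu using fun j => (hend j).1
  choose v hv hγv using fun j => (hend j).2
  obtain ⟨n, τ, hτ, hτT, hvisit⟩ :=
    (Finset.univ.image u ∪ Finset.univ.image v).exists_monotone_walk (by simp)
  have hpass (i : ℕ) : ∃ p ∈ D, e p ∈ γ '' s ∧ τ i ∈ s ∧ γ (τ i) = e p := by
    rcases Finset.mem_union.1 (hτT i) with h | h <;>
      obtain ⟨j, -, hj⟩ := Finset.mem_image.1 h <;> rw [← hj]
    · exact ⟨a j, (hD j).1, (hend j).1, hu j, hγu j⟩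
    · exact ⟨b j, (hD j).2, (hend j).2, hv j, hγv j⟩
  choose S hSD hSγ hτs hγS using hpass
  have hinj := injOn_of_dist_eq_abs_sub_rpow he
  have hvisit_a (j : ι) : ∃ i ≤ n, S i = a j := by
    obtain ⟨i, hi, hτi⟩ := hvisit (u j) (by simp)
    exact ⟨i, hi, hinj (hSD i) (hD j).1 (by rw [← hγS, hτi, hγu])⟩
  have hvisit_b (j : ι) : ∃ i ≤ n, S i = b j := by
    obtain ⟨i, hi, hτi⟩ := hvisit (v j) (by simp)
    exact ⟨i, hi, hinj (hSD i) (hD j).2 (by rw [← hγS, hτi, hγv])⟩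
  calc _ ≤ ENNReal.ofReal (∑ i ∈ Finset.range n, |S (i + 1) - S i| ^ β) :=
        ENNReal.ofReal_le_ofReal <| sum_rpow_sub_le_sum_rpow_abs_sub hβ hab hdisj
          (fun i => hgap _ (hSD i) (hSγ i)) hvisit_a hvisit_b
    _ ≤ eVariationOn γ s := ofReal_sum_rpow_le_eVariationOn he hτ hτs hSD hγS n

end Snowflake

theorem stmt_3_general {X : Type*} [MetricSpace X]
    (β : ℝ) (hβ : β ∈ Set.Ioo (0 : ℝ) 1) (e : ℝ → X)
    (he : ∀ s ∈ Set.Icc (0 : ℝ) 1, ∀ t ∈ Set.Icc (0 : ℝ) 1,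
      dist (e s) (e t) = |s - t| ^ β)
    (c d L : ℝ) (γ : ℝ → X)
    (hlen : eVariationOn γ (Set.Icc c d) = ENNReal.ofReal L)
    (a b : ℕ → ℝ) (hab : ∀ j, a j < b j)
    (hdisj : Pairwise (Function.onFun Disjoint fun j => Set.Ioo (a j) (b j)))
    (hunion : (⋃ j, Set.Ioo (a j) (b j)) =
      Set.Icc (0 : ℝ) 1 \ {t | e t ∈ γ '' Set.Icc c d})
    (hend : ∀ j, e (a j) ∈ γ '' Set.Icc c d ∧ e (b j) ∈ γ '' Set.Icc c d) :
    ∑' j : ℕ, ENNReal.ofReal ((b j - a j) ^ β) ≤ ENNReal.ofReal L := by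
  have hgap (j : ℕ) : Ioo (a j) (b j) ⊆ Icc 0 1 \ {t | e t ∈ γ '' Icc c d} :=
    hunion ▸ subset_iUnion (fun j => Ioo (a j) (b j)) j
  have hD (j : ℕ) : a j ∈ Icc 0 1 ∧ b j ∈ Icc 0 1 := by
    have hIcc : Icc (a j) (b j) ⊆ Icc 0 1 := by
      rw [← closure_Ioo (hab j).ne]
      exact closure_minimal ((hgap j).trans sdiff_subset) isClosed_Icc
    exact ⟨hIcc (left_mem_Icc.2 (hab j).le), hIcc (right_mem_Icc.2 (hab j).le)⟩
  rw [ENNReal.tsum_eq_iSup_sum, ← hlen]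
  refine iSup_le fun J => ?_
  rw [← ENNReal.ofReal_sum_of_nonneg fun j _ => Real.rpow_nonneg (sub_pos.2 (hab j)).le _,
    ← Finset.sum_coe_sort J]
  exact ofReal_sum_rpow_gap_le_eVariationOn hβ.1.le he γ _ (fun j : J => a j) (fun j => b j)
    (fun j => hab j) (fun j j' h => hdisj (Subtype.coe_injective.ne h)) (fun j => hD j)
    (fun t _ ht j hj => (hgap j hj).2 ht) fun j => hend j

/-- Let `Y ⊂ X` be identified isometrically (via `e`) with the β-snowflake line
restricted to `[0,1]`, and let `γ : [c,d] → X` be a rectifiable curve whose image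
contains the points `e 0` and `e 1`.  If `(a j, b j)` are the disjoint open
intervals forming `[0,1] \ (im γ ∩ Y)`, with all endpoints in `im γ ∩ Y`, then
`∑ⱼ |b j − a j|^β` is at most the length of `γ`. -/
theorem stmt_3 {X : Type*} [MetricSpace X]
    (β : ℝ) (hβ : β ∈ Set.Ioo (0 : ℝ) 1) (e : ℝ → X)
    (he : ∀ s ∈ Set.Icc (0 : ℝ) 1, ∀ t ∈ Set.Icc (0 : ℝ) 1,
      dist (e s) (e t) = |s - t| ^ β)
    (c d L : ℝ) (γ : ℝ → X) (hcont : ContinuousOn γ (Set.Icc c d))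
    (hlen : eVariationOn γ (Set.Icc c d) = ENNReal.ofReal L)
    (h0 : e 0 ∈ γ '' Set.Icc c d) (h1 : e 1 ∈ γ '' Set.Icc c d)
    (a b : ℕ → ℝ) (hab : ∀ j, a j < b j)
    (hdisj : Pairwise (Function.onFun Disjoint fun j => Set.Ioo (a j) (b j)))
    (hunion : (⋃ j, Set.Ioo (a j) (b j)) =
      Set.Icc (0 : ℝ) 1 \ {t | e t ∈ γ '' Set.Icc c d})
    (hend : ∀ j, e (a j) ∈ γ '' Set.Icc c d ∧ e (b j) ∈ γ '' Set.Icc c d) :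
    ∑' j : ℕ, ENNReal.ofReal ((b j - a j) ^ β) ≤ ENNReal.ofReal L :=
  stmt_3_general β hβ e he c d L γ hlen a b hab hdisj hunion hend
end

section
/- For α ≥ 1, the curve γ : (0, 1/2] → ℝ² given by γ(t) = (t, −t^α / log t + a) (for any fixed a ∈ ℝ) has infinite length with respect to the Grushin metric d_α; that is, ∫_0^{1/2} √(1 + t^{−2α}( t^{α−1}/log² t − α t^{α−1}/log t )²) dt = ∞. -/
/-!
Since `t^{-α} · t^{α-1} = t⁻¹`, the integrand is at least `(1 - α log t)/(t log² t)`, and for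
`α ≥ 1` this dominates `1/(t · (-log t))`. The latter is the derivative of `-log (-log t)`,
which blows up as `t → 0⁺`, so it is not integrable near `0`.
-/

open MeasureTheory Real Set Filter Topology

lemma hasDerivAt_log_neg_log {t : ℝ} (ht0 : 0 < t) (ht1 : t < 1) :
    HasDerivAt (fun s => log (-log s)) (-(t * -log t)⁻¹) t := by
  have hL : -log t ≠ 0 := (neg_pos.2 (log_neg ht0 ht1)).ne'
  refine ((hasDerivAt_log hL).comp t (hasDerivAt_log ht0.ne').neg).congr_deriv ?_
  rw [mul_inv]
  ring

theorem not_integrableOn_inv_mul_neg_log {c : ℝ} (hc : 0 < c) :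
    ¬ IntegrableOn (fun t => (t * -log t)⁻¹) (Ioc 0 c) := by
  have hnear : Ioo 0 1 ∈ 𝓝[>] (0 : ℝ) := Ioo_mem_nhdsGT one_pos
  refine not_integrableOn_of_tendsto_norm_atTop_of_deriv_isBigO_filter
    (f := fun s => log (-log s)) (𝓝[>] 0) (Ioc_mem_nhdsGT hc) ?_ ?_ ?_
  · filter_upwards [hnear] with t ht
    exact (hasDerivAt_log_neg_log ht.1 ht.2).differentiableAt
  · exact tendsto_abs_atTop_atTop.comp
      (tendsto_log_atTop.comp (tendsto_neg_atBot_atTop.comp tendsto_log_nhdsGT_zero))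
  · refine Asymptotics.IsBigO.of_bound 1 ?_
    filter_upwards [hnear] with t ht
    rw [(hasDerivAt_log_neg_log ht.1 ht.2).deriv, norm_neg, one_mul]

theorem setLIntegral_inv_mul_neg_log_eq_top {c : ℝ} (hc0 : 0 < c) (hc1 : c < 1) :
    ∫⁻ t in Ioc 0 c, ENNReal.ofReal (t * -log t)⁻¹ = ⊤ := by
  by_contra h
  refine not_integrableOn_inv_mul_neg_log hc0
    ((lintegral_ofReal_ne_top_iff_integrable (by fun_prop) ?_).1 h)
  rw [EventuallyLE, ae_restrict_iff' measurableSet_Ioc]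
  refine ae_of_all _ fun t ht => ?_
  have hL : 0 < -log t := neg_pos.2 (log_neg ht.1 (ht.2.trans_lt hc1))
  exact (inv_pos.2 (mul_pos ht.1 hL)).le

lemma rpow_neg_two_mul_mul_sq {t : ℝ} (ht : 0 < t) (α u : ℝ) :
    t ^ (-(2 * α)) * (t ^ (α - 1) * u) ^ 2 = (t⁻¹ * u) ^ 2 := by
  have hinv : t ^ (-α) * t ^ (α - 1) = t⁻¹ := by
    rw [← rpow_add ht, ← rpow_neg_one]
    ring_nf
  rw [← hinv, show -(2 * α) = -α * 2 by ring, rpow_mul ht.le, rpow_two]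
  ring

lemma inv_mul_neg_log_le {α t : ℝ} (hα : 1 ≤ α) (ht0 : 0 < t) (ht1 : t < 1) :
    (t * -log t)⁻¹ ≤ √(1 + t ^ (-(2 * α)) *
      (t ^ (α - 1) / log t ^ 2 - α * t ^ (α - 1) / log t) ^ 2) := by
  set L := log t
  have hL : 0 < -L := neg_pos.2 (log_neg ht0 ht1)
  have hfactor : t ^ (α - 1) / L ^ 2 - α * t ^ (α - 1) / L
      = t ^ (α - 1) * (1 / L ^ 2 + α / -L) := by
    rw [div_neg]
    ring
  have hcoef : 1 / -L ≤ 1 / L ^ 2 + α / -L := by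
    have : 1 / -L ≤ α / -L := by gcongr
    linarith [one_div_nonneg.2 (sq_nonneg L)]
  rw [hfactor, rpow_neg_two_mul_mul_sq ht0]
  calc (t * -L)⁻¹ = t⁻¹ * (1 / -L) := by rw [mul_inv, one_div]
    _ ≤ t⁻¹ * (1 / L ^ 2 + α / -L) := by gcongr
    _ ≤ |t⁻¹ * (1 / L ^ 2 + α / -L)| := le_abs_self _
    _ = √((t⁻¹ * (1 / L ^ 2 + α / -L)) ^ 2) := (sqrt_sq_eq_abs _).symm
    _ ≤ √(1 + (t⁻¹ * (1 / L ^ 2 + α / -L)) ^ 2) := sqrt_le_sqrt (by linarith)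

/-- For `α ≥ 1`, the Grushin length of the curve `t ↦ (t, −t^α/log t + a)` on
`(0,1/2]` is infinite:
`∫₀^{1/2} √(1 + t^{−2α}(t^{α−1}/log²t − α t^{α−1}/log t)²) dt = ∞`. -/
theorem stmt_10 (α : ℝ) (hα : 1 ≤ α) :
    ∫⁻ t in Set.Ioc (0 : ℝ) (1 / 2),
      ENNReal.ofReal (Real.sqrt (1 + t ^ (-(2 * α)) *
        (t ^ (α - 1) / (Real.log t) ^ 2 - α * t ^ (α - 1) / Real.log t) ^ 2)) = ⊤ := by
  refine top_unique ?_
  rw [← setLIntegral_inv_mul_neg_log_eq_top (by norm_num : (0 : ℝ) < 1 / 2) (by norm_num)]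
  refine setLIntegral_mono' measurableSet_Ioc fun t ht => ENNReal.ofReal_le_ofReal ?_
  exact inv_mul_neg_log_le hα ht.1 (by linarith [ht.2])
end
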